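/- arXiv:2512.00258 — 3 statements merged into one kernel-verified Lean document; each statement's English description precedes it below -/
import Mathlib

section
/- Let p, q ∈ ℝ^{n+1} with ‖p‖ > ‖q‖ > 0, and let p̃ = (‖q‖/‖p‖)·p. Then max(‖p − p̃‖, ‖p̃ − q‖) ≤ ‖p − q‖. -/
open RealInnerProductSpace

/-- if `‖p‖ > ‖q‖ > 0` and `p̃ = (‖q‖/‖p‖) • p`, then both legs of the broken
path `p → p̃ → q` are no longer than the segment `p q`. -/
theorem rescale_legs_le (n : ℕ) (p q : EuclideanSpace ℝ (Fin (n + 1)))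
    (hpq : ‖q‖ < ‖p‖) (hq : 0 < ‖q‖) :
    max ‖p - (‖q‖ / ‖p‖) • p‖ ‖(‖q‖ / ‖p‖) • p - q‖ ≤ ‖p - q‖ := by
  have hp : 0 < ‖p‖ := hq.trans hpq
  set c : ℝ := ‖q‖ / ‖p‖ with hc
  set a := p - c • p with ha
  set b := c • p - q with hb
  have hcs : ⟪p, q⟫ ≤ ‖p‖ * ‖q‖ := real_inner_le_norm p q
  have hc1 : c < 1 := (div_lt_one hp).mpr hpq
  have hc0 : 0 < c := div_pos hq hp
  have hinner : 0 ≤ ⟪a, b⟫ := by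
    have : ⟪a, b⟫ = (1 - c) * (c * ⟪p, p⟫ - ⟪p, q⟫) := by
      simp only [ha, hb, inner_sub_left, inner_sub_right, real_inner_smul_left,
        real_inner_smul_right]
      ring
    rw [this]
    have hpp : c * ⟪p, p⟫ = ‖p‖ * ‖q‖ := by
      rw [real_inner_self_eq_norm_sq, hc]
      field_simp
    nlinarith
  have hsum : ‖p - q‖ ^ 2 = ‖a‖ ^ 2 + 2 * ⟪a, b⟫ + ‖b‖ ^ 2 := by
    have : p - q = a + b := by simp [ha, hb]
    rw [this, ← real_inner_self_eq_norm_sq, ← real_inner_self_eq_norm_sq,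
      ← real_inner_self_eq_norm_sq, inner_add_add_self, real_inner_comm b a]
    ring
  have hA : ‖a‖ ≤ ‖p - q‖ := by
    nlinarith [norm_nonneg a, norm_nonneg b, norm_nonneg (p - q)]
  have hB : ‖b‖ ≤ ‖p - q‖ := by
    nlinarith [norm_nonneg a, norm_nonneg b, norm_nonneg (p - q)]
  exact max_le hA hB
end

section
/- Let φ: ℂ → ℂ be a K-bi-Lipschitz map with K > 1 and φ(0) = 0. For ε ∈ [0,1], define Φ_ε: ℂ² → ℂ² by Φ_ε(z₁, z₂) = (z₁ − ε·φ(z₂), z₂). Then each Φ_ε is a bijection, and there exists a constant K₀ > 1, depending only on K, such that every Φ_ε is K₀-bi-Lipschitz. In particular one may take: ‖Φ_ε(p) − Φ_ε(q)‖ ≤ √(1 + 2K²)·‖p − q‖ and ‖Φ_ε(p) − Φ_ε(q)‖ ≥ min(1/K, 1/√K')·‖p − q‖ where K' = 1 + K⁴/(K−1)². -/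
/-- The Euclidean norm on `ℂ² = ℂ × ℂ`: `‖(u,v)‖ = √(|u|² + |v|²)`. -/
noncomputable def eucNorm (p : ℂ × ℂ) : ℝ :=
  Real.sqrt (‖p.1‖ ^ 2 + ‖p.2‖ ^ 2)

/-!
Writing `A = ‖p₁ - q₁‖`, `B = ‖p₂ - q₂‖` and `D` for the norm of the first coordinate
of `Φ_ε p - Φ_ε q`, the triangle inequality and `‖ε φ a - ε φ b‖ ≤ K ‖a - b‖` give
`|D - A| ≤ K B`, and both estimates are statements about reals constrained this way.
The upper one is `(A + K B)² ≤ 2A² + 2K²B²`. For the lower one, either `A ≤ K²B / (K - 1)`,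
so that `B²` alone controls `A² + B²` up to the factor `K'`, or `(K - 1) A ≥ K² B`, which
forces `D ≥ A - K B ≥ A / K`.
-/

open Real Set Function

lemma eucNorm_nonneg (p : ℂ × ℂ) : 0 ≤ eucNorm p := sqrt_nonneg _

section RealEstimates

variable {K A B D : ℝ}

lemma sq_add_sq_le_of_le_add (hK : 1 ≤ K) (hD0 : 0 ≤ D) (hD : D ≤ A + K * B) :
    D ^ 2 + B ^ 2 ≤ (1 + 2 * K ^ 2) * (A ^ 2 + B ^ 2) := by
  have hD2 : D ^ 2 ≤ (A + K * B) ^ 2 := pow_le_pow_left₀ hD0 hD 2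
  have hK2 : 1 ≤ K ^ 2 := one_le_pow₀ hK
  nlinarith [sq_nonneg (A - K * B), mul_nonneg (sub_nonneg.2 hK2) (sq_nonneg A)]

lemma sq_add_sq_le_of_sub_le (hK : 1 < K) (hA : 0 ≤ A) (hD : A - K * B ≤ D) :
    A ^ 2 + B ^ 2 ≤ K ^ 2 * (D ^ 2 + B ^ 2) ∨
      A ^ 2 + B ^ 2 ≤ (1 + K ^ 4 / (K - 1) ^ 2) * (D ^ 2 + B ^ 2) := by
  have hK1 : 0 < K - 1 := by linarith
  rcases le_total (A * (K - 1)) (K ^ 2 * B) with hAB | hAB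
  · right
    have hA' : A ≤ K ^ 2 * B / (K - 1) := (le_div_iff₀ hK1).2 hAB
    have hA2 : A ^ 2 ≤ K ^ 4 / (K - 1) ^ 2 * B ^ 2 := by
      calc A ^ 2 ≤ (K ^ 2 * B / (K - 1)) ^ 2 := pow_le_pow_left₀ hA hA' 2
        _ = K ^ 4 / (K - 1) ^ 2 * B ^ 2 := by rw [div_pow, mul_pow]; ring
    have : 0 ≤ K ^ 4 / (K - 1) ^ 2 * D ^ 2 := by positivity
    nlinarith
  · left
    have hAD : A ≤ K * D := by nlinarith
    have hA2 : A ^ 2 ≤ (K * D) ^ 2 := pow_le_pow_left₀ hA hAD 2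
    have hK2 : 1 ≤ K ^ 2 := one_le_pow₀ hK.le
    nlinarith [mul_nonneg (sub_nonneg.2 hK2) (sq_nonneg B)]

lemma one_div_mul_sqrt_le_sqrt {c x y : ℝ} (hc : 0 < c) (h : x ≤ c ^ 2 * y) :
    1 / c * √x ≤ √y := by
  rw [one_div_mul_eq_div, div_le_iff₀ hc]
  calc √x ≤ √(c ^ 2 * y) := sqrt_le_sqrt h
    _ = √y * c := by rw [sqrt_mul (sq_nonneg c), sqrt_sq hc.le, mul_comm]

end RealEstimates

lemma exists_one_lt_const_of_bounds {U L : ℝ} (hU : 1 < U) (hL : 0 < L) :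
    ∃ K₀ : ℝ, 1 < K₀ ∧ 1 / K₀ ≤ L ∧ U ≤ K₀ :=
  ⟨max U (1 / L), lt_max_of_lt_left hU,
    (one_div_le (by positivity) hL).2 (le_max_right _ _), le_max_left _ _⟩

def shear (g : ℂ → ℂ) (p : ℂ × ℂ) : ℂ × ℂ :=
  (p.1 - g p.2, p.2)

section Shear

variable (g : ℂ → ℂ)

lemma shear_bijective : Bijective (shear g) :=
  bijective_iff_has_inverse.2
    ⟨fun p => (p.1 + g p.2, p.2), fun p => by simp [shear], fun p => by simp [shear]⟩

lemma shear_sub_shear (p q : ℂ × ℂ) :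
    shear g p - shear g q = (p.1 - q.1 - (g p.2 - g q.2), p.2 - q.2) := by
  rw [shear, shear, Prod.mk_sub_mk, sub_sub_sub_comm]

variable {g} {K : ℝ} (p q : ℂ × ℂ)

lemma eucNorm_shear_sub_shear_le (hg : ∀ a b, ‖g a - g b‖ ≤ K * ‖a - b‖) (hK : 1 ≤ K) :
    eucNorm (shear g p - shear g q) ≤ √(1 + 2 * K ^ 2) * eucNorm (p - q) := by
  rw [shear_sub_shear, eucNorm, eucNorm, Prod.fst_sub, Prod.snd_sub,
    ← sqrt_mul (by positivity)]
  refine sqrt_le_sqrt (sq_add_sq_le_of_le_add hK (norm_nonneg _) ?_)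
  calc _ ≤ ‖p.1 - q.1‖ + ‖g p.2 - g q.2‖ := norm_sub_le _ _
    _ ≤ _ := by gcongr; exact hg p.2 q.2

lemma le_eucNorm_shear_sub_shear (hg : ∀ a b, ‖g a - g b‖ ≤ K * ‖a - b‖) (hK : 1 < K) :
    min (1 / K) (1 / √(1 + K ^ 4 / (K - 1) ^ 2)) * eucNorm (p - q) ≤
      eucNorm (shear g p - shear g q) := by
  have hK' : 0 < 1 + K ^ 4 / (K - 1) ^ 2 := by positivity
  have hD : ‖p.1 - q.1‖ - K * ‖p.2 - q.2‖ ≤ ‖p.1 - q.1 - (g p.2 - g q.2)‖ := by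
    linarith [norm_sub_norm_le (p.1 - q.1) (g p.2 - g q.2), hg p.2 q.2]
  rw [shear_sub_shear, eucNorm, eucNorm, Prod.fst_sub, Prod.snd_sub]
  rcases sq_add_sq_le_of_sub_le hK (norm_nonneg _) hD with h | h
  · exact (mul_le_mul_of_nonneg_right (min_le_left _ _) (sqrt_nonneg _)).trans
      (one_div_mul_sqrt_le_sqrt (by linarith) h)
  · rw [← sq_sqrt hK'.le] at h
    exact (mul_le_mul_of_nonneg_right (min_le_right _ _) (sqrt_nonneg _)).trans
      (one_div_mul_sqrt_le_sqrt (sqrt_pos.2 hK') h)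

end Shear

theorem shear_family_biLipschitz_general (K : ℝ) (hK : 1 < K) (φ : ℂ → ℂ)
    (hbil : ∀ a b : ℂ, (1 / K) * ‖(a - b)‖ ≤ ‖(φ a - φ b)‖ ∧
      ‖(φ a - φ b)‖ ≤ K * ‖(a - b)‖)
    (Φ : ℝ → ℂ × ℂ → ℂ × ℂ)
    (hΦ : ∀ ε : ℝ, ∀ p : ℂ × ℂ, Φ ε p = (p.1 - (ε : ℂ) * φ p.2, p.2)) :
    (∀ ε ∈ Set.Icc (0 : ℝ) 1, Function.Bijective (Φ ε)) ∧
    (∃ K₀ : ℝ, 1 < K₀ ∧ ∀ ε ∈ Set.Icc (0 : ℝ) 1, ∀ p q : ℂ × ℂ,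
      (1 / K₀) * eucNorm (p - q) ≤ eucNorm (Φ ε p - Φ ε q) ∧
      eucNorm (Φ ε p - Φ ε q) ≤ K₀ * eucNorm (p - q)) ∧
    (∀ ε ∈ Set.Icc (0 : ℝ) 1, ∀ p q : ℂ × ℂ,
      eucNorm (Φ ε p - Φ ε q) ≤ Real.sqrt (1 + 2 * K ^ 2) * eucNorm (p - q) ∧
      min (1 / K) (1 / Real.sqrt (1 + K ^ 4 / (K - 1) ^ 2)) * eucNorm (p - q) ≤
        eucNorm (Φ ε p - Φ ε q)) := by
  have hΦ_eq (ε : ℝ) : Φ ε = shear (fun z => (ε : ℂ) * φ z) := funext (hΦ ε)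
  have hlip {ε : ℝ} (hε : ε ∈ Icc (0 : ℝ) 1) (a b : ℂ) :
      ‖(ε : ℂ) * φ a - (ε : ℂ) * φ b‖ ≤ K * ‖a - b‖ := by
    rw [← mul_sub, norm_mul, Complex.norm_real, norm_of_nonneg hε.1]
    exact (mul_le_of_le_one_left (norm_nonneg _) hε.2).trans (hbil a b).2
  have bounds : ∀ ε ∈ Icc (0 : ℝ) 1, ∀ p q : ℂ × ℂ,
      eucNorm (Φ ε p - Φ ε q) ≤ √(1 + 2 * K ^ 2) * eucNorm (p - q) ∧
      min (1 / K) (1 / √(1 + K ^ 4 / (K - 1) ^ 2)) * eucNorm (p - q) ≤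
        eucNorm (Φ ε p - Φ ε q) := fun ε hε p q => by
    rw [hΦ_eq]
    exact ⟨eucNorm_shear_sub_shear_le p q (hlip hε) hK.le,
      le_eucNorm_shear_sub_shear p q (hlip hε) hK⟩
  have hU : 1 < √(1 + 2 * K ^ 2) := by
    rw [lt_sqrt zero_le_one]; nlinarith
  have hL : 0 < min (1 / K) (1 / √(1 + K ^ 4 / (K - 1) ^ 2)) :=
    lt_min (by positivity) (by positivity)
  obtain ⟨K₀, hK₀, hK₀L, hK₀U⟩ := exists_one_lt_const_of_bounds hU hL
  refine ⟨fun ε _ => hΦ_eq ε ▸ shear_bijective _, ⟨K₀, hK₀, fun ε hε p q => ?_⟩, bounds⟩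
  have hpq := eucNorm_nonneg (p - q)
  exact ⟨(mul_le_mul_of_nonneg_right hK₀L hpq).trans (bounds ε hε p q).2,
    (bounds ε hε p q).1.trans (mul_le_mul_of_nonneg_right hK₀U hpq)⟩

/-- Claim in the proof of Proposition 5.4: if `φ : ℂ → ℂ` is `K`-bi-Lipschitz
(`K > 1`) with `φ(0) = 0`, then the shears `Φ_ε(z₁,z₂) = (z₁ − ε·φ(z₂), z₂)`, `ε ∈ [0,1]`,
are bijections and uniformly `K₀`-bi-Lipschitz for some `K₀ > 1` depending only on `K`;
explicitly one may take the upper constant `√(1+2K²)` and the lower constant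
`min(1/K, 1/√K')` with `K' = 1 + K⁴/(K−1)²`. -/
theorem shear_family_biLipschitz (K : ℝ) (hK : 1 < K) (φ : ℂ → ℂ) (hφ0 : φ 0 = 0)
    (hbil : ∀ a b : ℂ, (1 / K) * ‖(a - b)‖ ≤ ‖(φ a - φ b)‖ ∧
      ‖(φ a - φ b)‖ ≤ K * ‖(a - b)‖)
    (Φ : ℝ → ℂ × ℂ → ℂ × ℂ)
    (hΦ : ∀ ε : ℝ, ∀ p : ℂ × ℂ, Φ ε p = (p.1 - (ε : ℂ) * φ p.2, p.2)) :
    (∀ ε ∈ Set.Icc (0 : ℝ) 1, Function.Bijective (Φ ε)) ∧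
    (∃ K₀ : ℝ, 1 < K₀ ∧ ∀ ε ∈ Set.Icc (0 : ℝ) 1, ∀ p q : ℂ × ℂ,
      (1 / K₀) * eucNorm (p - q) ≤ eucNorm (Φ ε p - Φ ε q) ∧
      eucNorm (Φ ε p - Φ ε q) ≤ K₀ * eucNorm (p - q)) ∧
    (∀ ε ∈ Set.Icc (0 : ℝ) 1, ∀ p q : ℂ × ℂ,
      eucNorm (Φ ε p - Φ ε q) ≤ Real.sqrt (1 + 2 * K ^ 2) * eucNorm (p - q) ∧
      min (1 / K) (1 / Real.sqrt (1 + K ^ 4 / (K - 1) ^ 2)) * eucNorm (p - q) ≤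
        eucNorm (Φ ε p - Φ ε q)) :=
  shear_family_biLipschitz_general K hK φ hbil Φ hΦ
end

section
/- Let k > 1 be rational, and let S ⊆ ℂ² ∖ {0} be a set consisting of points of the form (r^k·u(r,τ), r·e^{i t(r,τ)}), with r ranging over (0, r₀), where the functions u and t are continuous and u is bounded. Then the tangent cone of S ∪ {0} at the origin is contained in {0} × ℂ = {(u,v) ∈ ℂ² : u = 0}. -/
/-!
Points of `S` satisfy `‖p.1‖ ≤ C ‖p.2‖ ^ k`. Along a curve `α(t) = t w + o(t)` the second
coordinate is `O(t)`, so the first is `O(t ^ k) = o(t)` because `k > 1`; comparing with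
`α(t).1 = t w.1 + o(t)` forces `w.1 = 0`.
-/

open Asymptotics

/-- The tangent cone of a set `A ⊆ ℂ²` at the origin: the set of vectors `w` for which
there is a curve `α` with `α(0) = 0`, `α((0,ε)) ⊆ A` and `α(t) = t·w + o(t)`. -/
def TangentConeAt0 (A : Set (ℂ × ℂ)) : Set (ℂ × ℂ) :=
  {w | ∃ (ε : ℝ) (α : ℝ → ℂ × ℂ), 0 < ε ∧ α 0 = 0 ∧
    (∀ t ∈ Set.Ioo (0 : ℝ) ε, α t ∈ A) ∧
    (fun t : ℝ => α t - t • w) =o[nhdsWithin 0 (Set.Ioi 0)] fun t : ℝ => t}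

open Filter Topology

theorem isLittleO_rpow_id_nhdsGT_zero {k : ℝ} (hk : 1 < k) :
    (fun t : ℝ => t ^ k) =o[𝓝[>] 0] id := by
  have hsmall : (fun t : ℝ => t ^ (k - 1)) =o[𝓝[>] 0] fun _ => (1 : ℝ) := by
    rw [isLittleO_one_iff]
    simpa [Real.zero_rpow (by linarith : k - 1 ≠ 0)] using
      ((Real.continuousAt_rpow_const 0 (k - 1) (.inr (by linarith))).tendsto.mono_left
        nhdsWithin_le_nhds)
  refine (hsmall.mul_isBigO (isBigO_refl id _)).congr' ?_ (.of_forall fun _ => one_mul _)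
  filter_upwards [self_mem_nhdsWithin] with t (ht : 0 < t)
  rw [id, ← Real.rpow_add_one ht.ne', sub_add_cancel]

theorem eq_zero_of_smul_isLittleO_id {E : Type*} [NormedAddCommGroup E] [NormedSpace ℝ E]
    {c : E} (h : (fun t : ℝ => t • c) =o[𝓝[>] 0] id) : c = 0 := by
  have hconst : (fun _ : ℝ => c) =o[𝓝[>] 0] fun _ => (1 : ℝ) := by
    refine ((isBigO_refl (fun t : ℝ => t⁻¹) _).smul_isLittleO h).congr' ?_ ?_
    all_goals filter_upwards [self_mem_nhdsWithin] with t (ht : 0 < t)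
    · simp [smul_smul, ht.ne']
    · simp [ht.ne']
  simpa using isLittleO_const_const_iff.1 hconst

theorem tangentConeAt0_subset_of_norm_fst_le {A : Set (ℂ × ℂ)} {C k : ℝ} (hk : 1 < k)
    (hA : ∀ p ∈ A, ‖p.1‖ ≤ C * ‖p.2‖ ^ k) : TangentConeAt0 A ⊆ {p | p.1 = 0} := by
  rintro w ⟨ε, α, hε, -, hαA, hα⟩
  obtain ⟨hα₁, hα₂⟩ := isLittleO_prod_left.1 hα
  have hsnd : (fun t => ‖(α t).2‖) =O[𝓝[>] 0] id := by
    have hlin : (fun t : ℝ => t • w.2) =O[𝓝[>] 0] fun t => t :=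
      .of_bound ‖w.2‖ (.of_forall fun t => by rw [norm_smul, mul_comm])
    exact (hα₂.isBigO.add hlin).norm_left.congr_left fun t => by simp
  have hfst_le : (fun t => (α t).1) =O[𝓝[>] 0] fun t => ‖(α t).2‖ ^ k := by
    refine .of_bound C ?_
    filter_upwards [Ioo_mem_nhdsGT hε] with t ht
    rw [Real.norm_of_nonneg (by positivity)]
    exact hA _ (hαA t ht)
  have hid_nonneg : 0 ≤ᶠ[𝓝[>] (0 : ℝ)] id :=
    eventually_nhdsWithin_of_forall fun _ h => le_of_lt h
  have hfst : (fun t => (α t).1) =o[𝓝[>] 0] id :=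
    hfst_le.trans_isLittleO <| (hsnd.rpow (by linarith) hid_nonneg).trans_isLittleO
      (isLittleO_rpow_id_nhdsGT_zero hk)
  exact eq_zero_of_smul_isLittleO_id <| (hfst.sub hα₁).congr_left fun t => by simp

theorem norm_rpow_mul_le_mul_norm_polar_rpow {k C : ℝ} {u : ℂ} (hu : ‖u‖ ≤ C)
    {r : ℝ} (hr : 0 ≤ r) (θ : ℝ) :
    ‖((r ^ k : ℝ) : ℂ) * u‖ ≤ C * ‖(r : ℂ) * Complex.exp (Complex.I * θ)‖ ^ k := by
  rw [norm_mul, norm_mul, Complex.norm_exp_I_mul_ofReal, mul_one, Complex.norm_real,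
    Complex.norm_real, Real.norm_of_nonneg (by positivity), Real.norm_of_nonneg hr, mul_comm]
  gcongr

theorem tangent_cone_in_axis_general (k : ℚ) (hk : 1 < (k : ℝ)) (r₀ : ℝ)
    (u : ℝ → ℝ → ℂ) (t : ℝ → ℝ → ℝ)
    (hbdd : ∃ Cb : ℝ, ∀ r τ : ℝ, ‖u r τ‖ ≤ Cb)
    (S : Set (ℂ × ℂ))
    (hS : ∀ p ∈ S, ∃ r τ : ℝ, 0 < r ∧ r < r₀ ∧
      p = (((r ^ (k : ℝ) : ℝ) : ℂ) * u r τ, (r : ℂ) * Complex.exp (Complex.I * t r τ))) :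
    TangentConeAt0 (insert 0 S) ⊆ {p : ℂ × ℂ | p.1 = 0} := by
  obtain ⟨Cb, hCb⟩ := hbdd
  refine tangentConeAt0_subset_of_norm_fst_le hk (C := Cb) ?_
  rintro p (rfl | hp)
  · simp [Real.zero_rpow (by linarith : (k : ℝ) ≠ 0)]
  · obtain ⟨r, τ, hr, -, rfl⟩ := hS p hp
    exact norm_rpow_mul_le_mul_norm_polar_rpow (hCb r τ) hr.le _

/-- Proposition 3.9(i): let `k > 1` be rational and let
`S ⊆ ℂ² ∖ {0}` consist of points `(r^k·u(r,τ), r·e^{i t(r,τ)})` with `r ∈ (0, r₀)`, where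
`u, t` are continuous and `u` is bounded. Then the tangent cone of `S ∪ {0}` at the origin
is contained in `{u = 0} = {0} × ℂ`. -/
theorem tangent_cone_in_axis (k : ℚ) (hk : 1 < (k : ℝ)) (r₀ : ℝ) (hr₀ : 0 < r₀)
    (u : ℝ → ℝ → ℂ) (t : ℝ → ℝ → ℝ)
    (hu_cont : Continuous fun p : ℝ × ℝ => u p.1 p.2)
    (ht_cont : Continuous fun p : ℝ × ℝ => t p.1 p.2)
    (hbdd : ∃ Cb : ℝ, ∀ r τ : ℝ, ‖u r τ‖ ≤ Cb)
    (S : Set (ℂ × ℂ)) (hS0 : (0 : ℂ × ℂ) ∉ S)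
    (hS : ∀ p ∈ S, ∃ r τ : ℝ, 0 < r ∧ r < r₀ ∧
      p = (((r ^ (k : ℝ) : ℝ) : ℂ) * u r τ, (r : ℂ) * Complex.exp (Complex.I * t r τ))) :
    TangentConeAt0 (insert 0 S) ⊆ {p : ℂ × ℂ | p.1 = 0} :=
  tangent_cone_in_axis_general k hk r₀ u t hbdd S hS
end
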